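/- Let Σ be a finite alphabet and let L = {w ∈ Σ* | alph(w) = Σ} be the language of all words containing every letter of Σ at least once. Then every NFA recognizing L has at least 2^{|Σ|} states. -/

import Mathlib

/-- `subk k w` is the set of scattered subwords of `w` of length at most `k`. -/
def subk {α : Type*} (k : ℕ) (w : List α) : Set (List α) :=
  {u | u.length ≤ k ∧ u.Sublist w}

/-- Two words are `k`-equivalent if they have the same subwords of length at most `k`. -/
def kEquiv {α : Type*} (k : ℕ) (u v : List α) : Prop :=
  subk k u = subk k v

/-- A language is `k`-piecewise testable (Simon's characterization):
`k`-equivalent words are equi-members. -/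
def IsPT {α : Type*} (k : ℕ) (L : Language α) : Prop :=
  ∀ u v : List α, kEquiv k u v → (u ∈ L ↔ v ∈ L)

/-- A DFA is minimal if all states are reachable and pairwise distinguishable. -/
def IsMinimalDFA {α σ : Type*} (A : DFA α σ) : Prop :=
  (∀ q : σ, ∃ w : List α, A.eval w = q) ∧
  ∀ p q : σ,
    (∀ w : List α, (A.evalFrom p w ∈ A.accept ↔ A.evalFrom q w ∈ A.accept)) → p = q

/-- There is a simple path (pairwise distinct states) with `m` transitions in the DFA `A`. -/
def DFAHasSimplePath {α σ : Type*} (A : DFA α σ) (m : ℕ) : Prop :=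
  ∃ (qs : Fin (m + 1) → σ) (as : Fin m → α),
    Function.Injective qs ∧ ∀ i : Fin m, A.step (qs i.castSucc) (as i) = qs i.succ

/-- The depth of a DFA: the number of transitions on a longest simple path. -/
noncomputable def dfaDepth {α σ : Type*} (A : DFA α σ) : ℕ :=
  sSup {m | DFAHasSimplePath A m}

/-- There is a simple path (pairwise distinct states) with `m` transitions in the NFA `A`. -/
def NFAHasSimplePath {α σ : Type*} (A : NFA α σ) (m : ℕ) : Prop :=
  ∃ (qs : Fin (m + 1) → σ) (as : Fin m → α),
    Function.Injective qs ∧ ∀ i : Fin m, qs i.succ ∈ A.step (qs i.castSucc) (as i)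

/-- The depth of an NFA: the number of transitions on a longest simple path. -/
noncomputable def nfaDepth {α σ : Type*} (A : NFA α σ) : ℕ :=
  sSup {m | NFAHasSimplePath A m}

/-!
Fooling-set argument: for each `S ⊆ Σ`, the word `uₛ vₛ` with `uₛ` listing `S` and `vₛ` listing
`Σ \ S` is accepted, so some accepting run passes through a state `pₛ` between the two halves.
If `pₛ = p_T` then `uₛ v_T` and `u_T vₛ` are both accepted, i.e. `T ⊆ S` and `S ⊆ T`;
hence `S ↦ pₛ` is injective.
-/

/-- Birget's extended fooling set. -/
def Language.IsFoolingSet {α ι : Type*} (L : Language α) (u v : ι → List α) : Prop :=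
  (∀ i, u i ++ v i ∈ L) ∧ ∀ i j, u i ++ v j ∈ L → u j ++ v i ∈ L → i = j

namespace NFA

variable {α σ : Type*} (M : NFA α σ)

theorem append_mem_accepts_iff {x y : List α} :
    x ++ y ∈ M.accepts ↔ ∃ p ∈ M.eval x, y ∈ M.acceptsFrom {p} := by
  rw [accepts_eq_acceptsFrom_start, append_mem_acceptsFrom, mem_acceptsFrom]
  simp only [mem_acceptsFrom]
  constructor
  · rintro ⟨q, hq, hqx⟩
    obtain ⟨p, hp, hpq⟩ := mem_evalFrom_iff_exists.1 hqx
    exact ⟨p, hp, q, hq, hpq⟩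
  · rintro ⟨p, hp, q, hq, hpq⟩
    exact ⟨q, hq, mem_evalFrom_iff_exists.2 ⟨p, hp, hpq⟩⟩

theorem card_le_card_of_isFoolingSet {ι : Type*} [Fintype ι] [Fintype σ] {u v : ι → List α}
    (hfool : M.accepts.IsFoolingSet u v) : Fintype.card ι ≤ Fintype.card σ := by
  obtain ⟨hmem, hsep⟩ := hfool
  choose p hp hacc using fun i => M.append_mem_accepts_iff.1 (hmem i)
  refine Fintype.card_le_of_injective p fun i j hij => hsep i j ?_ ?_
  · exact M.append_mem_accepts_iff.2 ⟨p i, hp i, hij ▸ hacc j⟩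
  · exact M.append_mem_accepts_iff.2 ⟨p j, hp j, hij ▸ hacc i⟩

end NFA

theorem Finset.forall_mem_toList_append_compl_toList_iff {α : Type*} [Fintype α] [DecidableEq α]
    {S T : Finset α} : (∀ a, a ∈ S.toList ++ Tᶜ.toList) ↔ T ⊆ S := by
  simp only [List.mem_append, mem_toList, mem_compl, subset_iff]
  exact ⟨fun h a ha => (h a).resolve_right (not_not_intro ha), fun h a => (em (a ∈ T)).imp (h ·) id⟩

theorem stmt15 {α : Type*} [Fintype α] {σ : Type*} [Fintype σ] (A : NFA α σ)
    (h : A.accepts = {w : List α | ∀ a : α, a ∈ w}) :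
    2 ^ Fintype.card α ≤ Fintype.card σ := by
  classical
  have hcover : ∀ S T : Finset α, S.toList ++ Tᶜ.toList ∈ A.accepts ↔ T ⊆ S := fun S T => by
    rw [h]
    exact Finset.forall_mem_toList_append_compl_toList_iff
  have hfool : A.accepts.IsFoolingSet (fun S : Finset α => S.toList) (fun S => Sᶜ.toList) :=
    ⟨fun S => (hcover S S).2 subset_rfl,
      fun S T hST hTS => subset_antisymm ((hcover T S).1 hTS) ((hcover S T).1 hST)⟩
  calc 2 ^ Fintype.card α = Fintype.card (Finset α) := Fintype.card_finset.symm
    _ ≤ Fintype.card σ := A.card_le_card_of_isFoolingSet hfool
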